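/- (Olsson's theorem) If s and t are coprime positive integers and λ is an s-core, then the t-core of λ is also an s-core. -/

import Mathlib

open Classical

/-- A partition: an infinite weakly decreasing sequence of non-negative integers
with finite sum.  Here `f n` denotes the part `λ_{n+1}`. -/
structure Partition' where
  f : ℕ → ℕ
  antitone : ∀ ⦃m n : ℕ⦄, m ≤ n → f n ≤ f m
  eventually_zero : ∃ N, ∀ n, N ≤ n → f n = 0

instance : Inhabited Partition' :=
  ⟨⟨fun _ => 0, fun _ _ _ => le_rfl, ⟨0, fun _ _ => rfl⟩⟩⟩

namespace Partition'

/-- The beta-set `β_r(λ) = {λ_i - i + r : i ≥ 1}`. -/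
def beta (r : ℤ) (l : Partition') : Set ℤ :=
  {x | ∃ n : ℕ, x = (l.f n : ℤ) - (n + 1) + r}

/-- The size `|λ|` of a partition. -/
noncomputable def size (l : Partition') : ℕ := ∑ᶠ n, l.f n

/-- The partition whose beta-set (for some shift `r`) is `B`, if it exists. -/
noncomputable def ofBeta (B : Set ℤ) : Partition' :=
  if h : ∃ l : Partition', ∃ r : ℤ, beta r l = B then h.choose else default

/-- The beta-set of the `s`-core: beads pushed up their runners as far as possible.
A position `x` is occupied iff the number of beads of `B` weakly above it on its runner
exceeds the number of gaps strictly below it on its runner. -/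
def coreBeta (s : ℕ) (B : Set ℤ) : Set ℤ :=
  {x | ({y : ℤ | y ∉ B ∧ y ≡ x [ZMOD (s : ℤ)] ∧ y < x}).ncard
      < ({b : ℤ | b ∈ B ∧ b ≡ x [ZMOD (s : ℤ)] ∧ x ≤ b}).ncard}

/-- The `s`-core of a partition. -/
noncomputable def core (s : ℕ) (l : Partition') : Partition' :=
  ofBeta (coreBeta s (beta 0 l))

/-- `λ` is an `s`-core. -/
def IsCore (s : ℕ) (l : Partition') : Prop := core s l = l

/-- The `s`-weight of `λ`. -/
noncomputable def wt (s : ℕ) (l : Partition') : ℕ := (size l - size (core s l)) / s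

/-- The component of the `s`-quotient of `λ` indexed by `j : ZMod s`. -/
noncomputable def quot (s : ℕ) (l : Partition') (j : ZMod s) : Partition' :=
  ofBeta {z : ℤ | ((j.val : ℤ) + (s : ℤ) * z) ∈ beta 0 l}

/-- The `s`-set entry `Γ_j(λ)`: the smallest integer in the class `j` mod `s`
not lying in the beta-set of the `s`-core of `λ`. -/
noncomputable def sSet (s : ℕ) (l : Partition') (j : ZMod s) : ℤ :=
  sInf {x : ℤ | (x : ZMod s) = j ∧ x ∉ beta 0 (core s l)}

/-- `λ` is an `[s:t]`-core. -/
def IsGenCore (s t : ℕ) (l : Partition') : Prop :=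
  wt s (core t l) = wt s l

/-- The level `t` action of the generator `w_i` of the affine symmetric group `W_s` on `ℤ`. -/
def genActZ (s t : ℕ) (i : ZMod s) (n : ℤ) : ℤ :=
  if (n : ZMod s) = (i - 1) * (t : ZMod s) - ((((s : ℤ) - 1) * ((t : ℤ) - 1) / 2 : ℤ) : ZMod s)
    then n + t
  else if (n : ZMod s) = i * (t : ZMod s) - ((((s : ℤ) - 1) * ((t : ℤ) - 1) / 2 : ℤ) : ZMod s)
    then n - t
  else n

/-- The level `t` action of the generator `w_i` of `W_s` on partitions, via beta-sets. -/
noncomputable def genAct (s t : ℕ) (i : ZMod s) (l : Partition') : Partition' :=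
  ofBeta (genActZ s t i '' beta 0 l)

/-- The action of a word in the generators of `W_s`, at level `t`, on partitions. -/
noncomputable def wordAct (s t : ℕ) (w : List (ZMod s)) (l : Partition') : Partition' :=
  w.foldr (genAct s t) l

/-- `λ` and `μ` lie in the same orbit for the level `t` action of `W_s`. -/
def SameOrbit (s t : ℕ) (l m : Partition') : Prop :=
  ∃ w : List (ZMod s), wordAct s t w l = m

/-- `λ` and `μ` lie in the same orbit for the commuting actions of `W_s` (level `t`)
and `W_t` (level `s`). -/
def SameOrbit2 (s t : ℕ) (l m : Partition') : Prop :=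
  ∃ a : List (ZMod s), ∃ b : List (ZMod t), wordAct s t a (wordAct t s b l) = m

/-- The `t`-weighted `s`-quotient of `λ`: the multiset of pairs
`(Γ_i(λ) + tℤ, λ^(i))` over `i ∈ ℤ/sℤ`. -/
noncomputable def twq (s t : ℕ) (l : Partition') : Multiset (ZMod t × Partition') :=
  ((List.range s).map (fun i =>
    (((sSet s l (i : ZMod s) : ℤ) : ZMod t), quot s l (i : ZMod s))) : Multiset _)

/-- The largest `(s,t)`-core `κ_{s,t}`: the partition whose beta-set is the set of
integers not expressible as a non-negative integer combination of `s` and `t`. -/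
noncomputable def kappa (s t : ℕ) : Partition' :=
  ofBeta {x : ℤ | ¬ ∃ a b : ℕ, x = (a : ℤ) * s + (b : ℤ) * t}

end Partition'

/-!
A partition is an `s`-core exactly when its beta-set is closed under `x ↦ x - s`: every bead sits
as high on its runner of the `s`-abacus as it can. This closure property does not depend on the
shift of the beta-set, which `ofBeta` leaves unspecified.

In the `t`-core, `x` is a bead iff the beads weakly above `x` on its `t`-runner outnumber the gaps
below `x` on it. If the beta-set is closed under `x ↦ x - s`, then `b ↦ b - s` injects the beads
above `x` into those above `x - s`, and `y ↦ y + s` injects the gaps below `x - s` into those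
below `x`. Hence `x - s` is a bead of the `t`-core whenever `x` is.
-/

theorem Nat.exists_nth_eq_add_of_forall_le {p : ℕ → Prop} {K : ℕ} (hK : ∀ k, K ≤ k → p k) :
    ∃ d N, ∀ n, N ≤ n → Nat.nth p n = n + d := by
  classical
  refine ⟨K - Nat.count p K, Nat.count p K, fun n hn => ?_⟩
  have hcount : Nat.count p (K + (n - Nat.count p K)) = n := by
    rw [Nat.count_add, Nat.count_of_forall fun k _ => hK _ (Nat.le_add_right K k)]
    omega
  have := Nat.nth_count (hK _ (Nat.le_add_right K (n - Nat.count p K)))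
  rw [hcount] at this
  have := Nat.count_le (p := p) (n := K)
  omega

namespace Partition'

def SubClosed (s : ℕ) (B : Set ℤ) : Prop := ∀ x ∈ B, x - s ∈ B

structure IsBetaLike (B : Set ℤ) : Prop where
  bddAbove : BddAbove B
  exists_Iic_subset : ∃ a, Set.Iic a ⊆ B

section Beta

variable {s : ℕ} {r r' : ℤ} {l l' : Partition'}

theorem mem_beta_iff {x : ℤ} : x ∈ beta r l ↔ x - r ∈ beta 0 l :=
  exists_congr fun n => by constructor <;> intro h <;> linarith

theorem subClosed_beta_iff : SubClosed s (beta r l) ↔ SubClosed s (beta 0 l) := by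
  refine ⟨fun h x hx => ?_, fun h x hx => ?_⟩
  · have := h (x + r) (mem_beta_iff.mpr (by simpa using hx))
    simpa [mem_beta_iff, sub_right_comm] using this
  · simpa [mem_beta_iff, sub_right_comm] using h _ (mem_beta_iff.mp hx)

theorem isBetaLike_beta (r : ℤ) (l : Partition') : IsBetaLike (beta r l) := by
  obtain ⟨N, hN⟩ := l.eventually_zero
  refine ⟨⟨l.f 0 - 1 + r, ?_⟩, ⟨-(N + 1) + r, fun x hx => ⟨(r - x - 1).toNat, ?_⟩⟩⟩
  · rintro _ ⟨n, rfl⟩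
    have := l.antitone n.zero_le
    omega
  · rw [Set.mem_Iic] at hx
    rw [hN _ (by omega)]
    omega

theorem neg_beta (r : ℤ) (l : Partition') :
    -beta r l = Set.range fun n : ℕ => (n + 1 : ℤ) - l.f n - r := by
  ext x
  simp only [Set.mem_neg, beta, Set.mem_ofPred_eq, Set.mem_range]
  exact exists_congr fun n => by constructor <;> intro h <;> linarith

theorem strictMono_neg_beta (r : ℤ) (l : Partition') :
    StrictMono fun n : ℕ => (n + 1 : ℤ) - l.f n - r :=
  strictMono_nat_of_lt_succ fun n => by
    have := l.antitone (Nat.le_add_right n 1)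
    push_cast
    omega

theorem eq_of_beta_eq (h : beta r l = beta r' l') : l = l' := by
  have hseq := ((strictMono_neg_beta r l).range_inj (strictMono_neg_beta r' l')).mp
    (by rw [← neg_beta, ← neg_beta, h])
  obtain ⟨N, hN⟩ := l.eventually_zero
  obtain ⟨N', hN'⟩ := l'.eventually_zero
  have hr : r = r' := by
    have := congrFun hseq (max N N')
    simp only [hN _ (le_max_left N N'), hN' _ (le_max_right N N')] at this
    omega
  cases l
  cases l'
  congr
  funext n
  have := congrFun hseq n
  simp only at this
  omega

theorem ofBeta_beta (r : ℤ) (l : Partition') : ofBeta (beta r l) = l := by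
  have h : ∃ l' : Partition', ∃ r' : ℤ, beta r' l' = beta r l := ⟨l, r, rfl⟩
  rw [ofBeta, dif_pos h]
  exact eq_of_beta_eq h.choose_spec.choose_spec

theorem exists_beta_eq {B : Set ℤ} (hB : IsBetaLike B) : ∃ l r, beta r l = B := by
  obtain ⟨b, hb⟩ := hB.bddAbove
  obtain ⟨a, ha⟩ := hB.exists_Iic_subset
  set p : ℕ → Prop := fun k => b - k ∈ B
  have hK : ∀ k, (b - a).toNat ≤ k → p k := fun k hk => ha (by simp only [Set.mem_Iic]; omega)
  have hinf : (Set.ofPred p).Infinite := (Set.Ici_infinite _).mono hK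
  have hmono := Nat.nth_strictMono hinf
  obtain ⟨d, N, hN⟩ := Nat.exists_nth_eq_add_of_forall_le hK
  have hle : ∀ n, Nat.nth p n ≤ n + d := fun n => by
    have := hmono.add_le_nat N n
    rw [hN _ (Nat.le_add_right _ _)] at this
    omega
  refine ⟨⟨fun n => n + d - Nat.nth p n, fun m n hmn => ?_, ⟨N, fun n hn => ?_⟩⟩, b + 1 - d, ?_⟩
  · have := hmono.add_le_nat (n - m) m
    rw [Nat.sub_add_cancel hmn] at this
    omega
  · simp only [hN n hn, Nat.sub_self]
  · ext x
    constructor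
    · rintro ⟨n, rfl⟩
      convert Nat.nth_mem_of_infinite hinf n using 1
      push_cast [hle n]
      omega
    · intro hx
      have hxb := hb hx
      have hp : p (b - x).toNat := by
        simpa [p, Int.toNat_of_nonneg (sub_nonneg.mpr hxb)] using hx
      obtain ⟨n, hn⟩ : (b - x).toNat ∈ Set.range (Nat.nth p) := by
        rwa [Nat.range_nth_of_infinite hinf]
      refine ⟨n, ?_⟩
      push_cast [hle n]
      omega

theorem exists_beta_ofBeta {B : Set ℤ} (hB : IsBetaLike B) : ∃ r, beta r (ofBeta B) = B := by
  have h := exists_beta_eq hB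
  rw [ofBeta, dif_pos h]
  exact h.choose_spec

end Beta

def beadsAbove (t : ℕ) (B : Set ℤ) (x : ℤ) : Set ℤ := {b | b ∈ B ∧ b ≡ x [ZMOD t] ∧ x ≤ b}

def gapsBelow (t : ℕ) (B : Set ℤ) (x : ℤ) : Set ℤ := {y | y ∉ B ∧ y ≡ x [ZMOD t] ∧ y < x}

section CoreBeta

variable {s t : ℕ} {B : Set ℤ} {x : ℤ}

theorem mem_coreBeta_iff :
    x ∈ coreBeta t B ↔ (gapsBelow t B x).ncard < (beadsAbove t B x).ncard :=
  Iff.rfl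

theorem finite_beadsAbove (hB : BddAbove B) (t : ℕ) (x : ℤ) : (beadsAbove t B x).Finite := by
  obtain ⟨b, hb⟩ := hB
  exact (Set.finite_Icc x b).subset fun y hy => ⟨hy.2.2, hb hy.1⟩

theorem finite_gapsBelow (hB : ∃ a, Set.Iic a ⊆ B) (t : ℕ) (x : ℤ) :
    (gapsBelow t B x).Finite := by
  obtain ⟨a, ha⟩ := hB
  refine (Set.finite_Icc a x).subset fun y hy => ⟨?_, hy.2.2.le⟩
  by_contra h
  exact hy.1 (ha (not_le.mp h).le)

theorem mem_coreBeta_of_forall_lt_mem (hB : BddAbove B) (hx : x ∈ B)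
    (h : ∀ y < x, y ≡ x [ZMOD t] → y ∈ B) : x ∈ coreBeta t B := by
  have hgaps : gapsBelow t B x = ∅ :=
    Set.eq_empty_of_forall_notMem fun y hy => hy.1 (h y hy.2.2 hy.2.1)
  rw [mem_coreBeta_iff, hgaps, Set.ncard_empty, Set.ncard_pos (finite_beadsAbove hB t x)]
  exact ⟨x, hx, Int.ModEq.refl x, le_rfl⟩

theorem notMem_coreBeta_of_forall_ge_notMem (h : ∀ b ≥ x, b ≡ x [ZMOD t] → b ∉ B) :
    x ∉ coreBeta t B := by
  have hbeads : beadsAbove t B x = ∅ :=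
    Set.eq_empty_of_forall_notMem fun b hb => h b hb.2.2 hb.2.1 hb.1
  simp [mem_coreBeta_iff, hbeads]

theorem IsBetaLike.coreBeta (hB : IsBetaLike B) : IsBetaLike (coreBeta t B) := by
  obtain ⟨b, hb⟩ := hB.bddAbove
  obtain ⟨a, ha⟩ := hB.exists_Iic_subset
  refine ⟨⟨b, fun x hx => ?_⟩, ⟨a, fun x hx => ?_⟩⟩
  · by_contra hxb
    exact notMem_coreBeta_of_forall_ge_notMem
      (fun y hy _ hyB => hxb ((hb hyB).trans' hy)) hx
  · exact mem_coreBeta_of_forall_lt_mem ⟨b, hb⟩ (ha hx)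
      fun y hy _ => ha (hy.le.trans (Set.mem_Iic.mp hx))

theorem subClosed_coreBeta_self (hB : IsBetaLike B) : SubClosed t (coreBeta t B) := by
  intro x hx
  have hbeads : beadsAbove t B x ⊆ beadsAbove t B (x - t) := fun b ⟨hbB, hbx, hxb⟩ =>
    ⟨hbB, Int.modEq_sub_modulus_iff.mpr hbx, by omega⟩
  have hgaps : gapsBelow t B (x - t) ⊆ gapsBelow t B x := fun y ⟨hyB, hyx, hyx'⟩ =>
    ⟨hyB, Int.modEq_sub_modulus_iff.mp hyx, by omega⟩
  rw [mem_coreBeta_iff] at hx ⊢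
  calc (gapsBelow t B (x - t)).ncard
      ≤ (gapsBelow t B x).ncard :=
        Set.ncard_le_ncard hgaps (finite_gapsBelow hB.exists_Iic_subset t x)
    _ < (beadsAbove t B x).ncard := hx
    _ ≤ (beadsAbove t B (x - t)).ncard :=
        Set.ncard_le_ncard hbeads (finite_beadsAbove hB.bddAbove t _)

theorem SubClosed.coreBeta (hB : IsBetaLike B) (hs : SubClosed s B) :
    SubClosed s (coreBeta t B) := by
  intro x hx
  rw [mem_coreBeta_iff] at hx ⊢
  calc (gapsBelow t B (x - s)).ncard
      ≤ (gapsBelow t B x).ncard := by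
        refine Set.ncard_le_ncard_of_injOn (· + (s : ℤ)) (fun y ⟨hyB, hyx, hyx'⟩ => ⟨?_, ?_, ?_⟩)
          (add_left_injective _).injOn (finite_gapsBelow hB.exists_Iic_subset t x)
        · exact fun h => hyB (by simpa using hs _ h)
        · simpa using hyx.add_right (s : ℤ)
        · omega
    _ < (beadsAbove t B x).ncard := hx
    _ ≤ (beadsAbove t B (x - s)).ncard :=
        Set.ncard_le_ncard_of_injOn (· - (s : ℤ))
          (fun b ⟨hbB, hbx, hxb⟩ => ⟨hs b hbB, hbx.sub_right _, by omega⟩)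
          (sub_left_injective).injOn (finite_beadsAbove hB.bddAbove t _)

theorem SubClosed.sub_mul_mem (hs : SubClosed s B) {b : ℤ} (hb : b ∈ B) (n : ℕ) :
    b - n * s ∈ B := by
  induction n with
  | zero => simpa
  | succ n ih => simpa [add_mul, sub_add_eq_sub_sub] using hs _ ih

theorem SubClosed.mem_of_modEq_of_le (hs : SubClosed s B) {b y : ℤ} (hb : b ∈ B)
    (hyb : y ≡ b [ZMOD s]) (hle : y ≤ b) : y ∈ B := by
  obtain ⟨k, hk⟩ := Int.modEq_iff_dvd.mp hyb
  rcases Nat.eq_zero_or_pos s with rfl | hs0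
  · rwa [show y = b by simpa [sub_eq_zero, eq_comm] using hk]
  · lift k to ℕ using by nlinarith
    convert hs.sub_mul_mem hb k using 1
    linarith

theorem coreBeta_eq_self (hB : BddAbove B) (hs : SubClosed s B) : coreBeta s B = B := by
  ext x
  refine ⟨fun hx => ?_, fun hx => mem_coreBeta_of_forall_lt_mem hB hx
    fun y hy hyx => hs.mem_of_modEq_of_le hx hyx hy.le⟩
  by_contra hxB
  exact notMem_coreBeta_of_forall_ge_notMem
    (fun b hb hbx hbB => hxB (hs.mem_of_modEq_of_le hbB hbx.symm hb)) hx

end CoreBeta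

section Core

variable {s : ℕ} {l : Partition'}

theorem exists_beta_core_eq (t : ℕ) (l : Partition') :
    ∃ r, beta r (core t l) = coreBeta t (beta 0 l) :=
  exists_beta_ofBeta (isBetaLike_beta 0 l).coreBeta

theorem isCore_iff_subClosed : IsCore s l ↔ SubClosed s (beta 0 l) := by
  constructor
  · intro h
    obtain ⟨r, hr⟩ := exists_beta_core_eq s l
    rw [show core s l = l from h] at hr
    rw [← subClosed_beta_iff (r := r), hr]
    exact subClosed_coreBeta_self (isBetaLike_beta 0 l)
  · intro h
    rw [IsCore, core, coreBeta_eq_self (isBetaLike_beta 0 l).bddAbove h, ofBeta_beta]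

theorem subClosed_beta_core (t : ℕ) (h : SubClosed s (beta 0 l)) :
    SubClosed s (beta 0 (core t l)) := by
  obtain ⟨r, hr⟩ := exists_beta_core_eq t l
  rw [← subClosed_beta_iff (r := r), hr]
  exact h.coreBeta (isBetaLike_beta 0 l)

end Core

end Partition'

open Partition' in
theorem isCore_core_of_isCore_general (s t : ℕ) (l : Partition') (h : IsCore s l) :
    IsCore s (core t l) := by
  rw [isCore_iff_subClosed] at h ⊢
  exact subClosed_beta_core t h

open Partition' in
/-- Olsson's theorem: the `t`-core of an `s`-core is again an `s`-core. -/
theorem isCore_core_of_isCore (s t : ℕ) (hs : 0 < s) (ht : 0 < t) (hst : Nat.Coprime s t)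
    (l : Partition') (h : IsCore s l) : IsCore s (core t l) :=
  isCore_core_of_isCore_general s t l h
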